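/- arXiv:math/0607333 — 2 statements merged into one kernel-verified Lean document; each statement's English description precedes it below -/
import Mathlib

section
/- If T is a consistent, recursively axiomatized theory extending a sufficiently strong arithmetic (satisfying the Hilbert–Bernays derivability conditions with a provability predicate Prov), and G is a sentence such that T proves G ↔ ¬Prov(⌜G⌝), then T does not prove G. -/
/-- Gödel's first incompleteness theorem (unprovability of G), abstract form. -/
theorem goedel_first_unprovable {F : Type*} (imp : F → F → F) (bot : F)
    (Pr : F → Prop) (Prov : F → F)
    (mp : ∀ φ ψ : F, Pr (imp φ ψ) → Pr φ → Pr ψ)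
    (consistent : ¬ Pr bot)
    (D1 : ∀ φ : F, Pr φ → Pr (Prov φ))
    (D2 : ∀ φ ψ : F, Pr (imp (Prov (imp φ ψ)) (imp (Prov φ) (Prov ψ))))
    (D3 : ∀ φ : F, Pr (imp (Prov φ) (Prov (Prov φ))))
    (G : F)
    (fix1 : Pr (imp G (imp (Prov G) bot)))
    (fix2 : Pr (imp (imp (Prov G) bot) G)) :
    ¬ Pr G := by
  intro hG
  exact consistent (mp _ _ (mp _ _ fix1 hG) (D1 _ hG))
end

section
/- Gödel's second incompleteness theorem (abstract form): If T is consistent, satisfies the derivability conditions D1–D3, and admits a Gödel fixed point G with T ⊢ G ↔ ¬Prov(⌜G⌝), then T does not prove Con(T), where Con(T) := ¬Prov(⌜⊥⌝). -/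
/-- Gödel's second incompleteness theorem, abstract form:
a consistent theory satisfying D1–D3 with a Gödel fixed point does not
prove its own consistency Con(T) := ¬Prov(⌜⊥⌝). -/
theorem goedel_second {F : Type*} (imp : F → F → F) (bot : F)
    (Pr : F → Prop) (Prov : F → F)
    (mp : ∀ φ ψ : F, Pr (imp φ ψ) → Pr φ → Pr ψ)
    (A1 : ∀ φ ψ : F, Pr (imp φ (imp ψ φ)))
    (A2 : ∀ φ ψ χ : F, Pr (imp (imp φ (imp ψ χ)) (imp (imp φ ψ) (imp φ χ))))
    (A3 : ∀ φ : F, Pr (imp (imp (imp φ bot) bot) φ))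
    (consistent : ¬ Pr bot)
    (D1 : ∀ φ : F, Pr φ → Pr (Prov φ))
    (D2 : ∀ φ ψ : F, Pr (imp (Prov (imp φ ψ)) (imp (Prov φ) (Prov ψ))))
    (D3 : ∀ φ : F, Pr (imp (Prov φ) (Prov (Prov φ))))
    (G : F)
    (fix1 : Pr (imp G (imp (Prov G) bot)))
    (fix2 : Pr (imp (imp (Prov G) bot) G)) :
    ¬ Pr (imp (Prov bot) bot) := by
  intro hCon
  -- combinators
  have s : ∀ φ ψ χ : F, Pr (imp φ (imp ψ χ)) → Pr (imp φ ψ) → Pr (imp φ χ) :=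
    fun φ ψ χ h1 h2 => mp _ _ (mp _ _ (A2 φ ψ χ) h1) h2
  have lift : ∀ φ ψ : F, Pr ψ → Pr (imp φ ψ) :=
    fun φ ψ h => mp _ _ (A1 ψ φ) h
  -- Pr (Prov G → Prov (Prov G → bot))
  have h1 : Pr (imp (Prov G) (Prov (imp (Prov G) bot))) :=
    mp _ _ (D2 G (imp (Prov G) bot)) (D1 _ fix1)
  -- Pr (Prov G → (Prov (Prov G) → Prov bot))
  have h2 : Pr (imp (Prov G) (imp (Prov (Prov G)) (Prov bot))) :=
    s _ _ _ (lift _ _ (D2 (Prov G) bot)) h1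
  -- Pr (Prov G → Prov bot)
  have h4 : Pr (imp (Prov G) (Prov bot)) := s _ _ _ h2 (D3 G)
  -- Pr (Prov G → bot) using Con
  have h5 : Pr (imp (Prov G) bot) := s _ _ _ (lift _ _ hCon) h4
  have hG : Pr G := mp _ _ fix2 h5
  exact consistent (mp _ _ (mp _ _ fix1 hG) (D1 G hG))
end
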